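/- arXiv:2304.01928 — 3 statements merged into one kernel-verified Lean document; each statement's English description precedes it below -/
import Mathlib

section
/- Let G be an undirected tree on N vertices with M = N-1 edges, given an arbitrary orientation, and for each edge k let R̄_k ∈ SO(3). Define the block matrix H̄ ∈ ℝ^{3N×3M} with 3×3 block (i,k) equal to I₃ if vertex i is the head of edge k, -R̄_k if vertex i is the tail of edge k, and 0 otherwise. Then H̄ has full column rank, i.e., H̄x = 0 implies x = 0 for x ∈ ℝ^{3M}; equivalently, the null space of H̄ᵀ has dimension exactly 3. -/
open Matrix

theorem stmt12 (N : ℕ) (head tail : Fin N.pred → Fin N)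
    (hht : ∀ k, head k ≠ tail k)
    (htree : (SimpleGraph.fromRel
      (fun i j => ∃ k, head k = i ∧ tail k = j)).Connected)
    (Rbar : Fin N.pred → Matrix (Fin 3) (Fin 3) ℝ)
    (hSO : ∀ k, (Rbar k)ᵀ * Rbar k = 1 ∧ (Rbar k).det = 1)
    (Hbar : Matrix (Fin N × Fin 3) (Fin N.pred × Fin 3) ℝ)
    (hHbar : ∀ i a k b, Hbar (i, a) (k, b) =
      if i = head k then (if a = b then 1 else 0)
      else if i = tail k then -(Rbar k a b) else 0) :
    (∀ x : Fin N.pred × Fin 3 → ℝ, Hbar *ᵥ x = 0 → x = 0) ∧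
    Module.finrank ℝ (LinearMap.ker (Matrix.mulVecLin Hbarᵀ)) = 3 := by
  obtain ⟨v₀⟩ := htree.nonempty
  have hN : 1 ≤ N := v₀.pos
  -- compute the entries of Hbarᵀ *ᵥ y
  have hmul : ∀ (y : Fin N × Fin 3 → ℝ) (k : Fin N.pred) (b : Fin 3),
      (Hbarᵀ *ᵥ y) (k, b) = y (head k, b) - ∑ a, Rbar k a b * y (tail k, a) := by
    intro y k b
    have h1 : (Hbarᵀ *ᵥ y) (k, b)
        = ∑ i : Fin N, ∑ a : Fin 3, Hbar (i, a) (k, b) * y (i, a) := by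
      simp [Matrix.mulVec, dotProduct, Fintype.sum_prod_type,
        Matrix.transpose_apply]
    rw [h1]
    have h2 : ∀ i : Fin N, (∑ a : Fin 3, Hbar (i, a) (k, b) * y (i, a))
        = (if i = head k then y (i, b) else 0)
          + (if i = tail k then -∑ a, Rbar k a b * y (i, a) else 0) := by
      intro i
      by_cases hih : i = head k
      · have hit : ¬ i = tail k := by rw [hih]; exact hht k
        simp only [hih, if_pos rfl, if_neg (hht k), add_zero]
        rw [← hih]
        simp [hHbar, hih, ite_mul, Finset.sum_ite_eq' Finset.univ b]
      · by_cases hit : i = tail k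
        · simp only [if_neg hih, if_pos hit, zero_add]
          rw [← Finset.sum_neg_distrib]
          refine Finset.sum_congr rfl fun a _ => ?_
          rw [hHbar, if_neg hih, if_pos hit, neg_mul]
        · simp only [if_neg hih, if_neg hit, add_zero]
          refine Finset.sum_eq_zero fun a _ => ?_
          rw [hHbar, if_neg hih, if_neg hit, zero_mul]
    rw [Finset.sum_congr rfl fun i _ => h2 i, Finset.sum_add_distrib]
    simp [Finset.sum_ite_eq' Finset.univ, sub_eq_add_neg]
  -- zero propagation along edges
  have hprop : ∀ (y : Fin N × Fin 3 → ℝ), Hbarᵀ *ᵥ y = 0 → ∀ k : Fin N.pred,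
      ((∀ a, y (tail k, a) = 0) ↔ (∀ b, y (head k, b) = 0)) := by
    intro y hy k
    have heq : ∀ b, y (head k, b) = ((Rbar k)ᵀ *ᵥ (fun a => y (tail k, a))) b := by
      intro b
      have := congrFun hy (k, b)
      rw [hmul] at this
      simp only [Pi.zero_apply] at this
      have h' : y (head k, b) = ∑ a, Rbar k a b * y (tail k, a) := by linarith
      rw [h']
      simp [Matrix.mulVec, dotProduct, Matrix.transpose_apply]
    constructor
    · intro h0 b
      rw [heq b]
      simp only [Matrix.mulVec, dotProduct]
      exact Finset.sum_eq_zero fun a _ => by rw [h0 a, mul_zero]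
    · intro h0 a
      have hv : (Rbar k)ᵀ *ᵥ (fun a => y (tail k, a)) = 0 := by
        funext b; rw [← heq b, h0 b]; rfl
      have hR : Rbar k * (Rbar k)ᵀ = 1 := mul_eq_one_comm.mpr (hSO k).1
      have : Rbar k *ᵥ ((Rbar k)ᵀ *ᵥ (fun a => y (tail k, a)))
          = (fun a => y (tail k, a)) := by
        rw [Matrix.mulVec_mulVec, hR, Matrix.one_mulVec]
      rw [hv, Matrix.mulVec_zero] at this
      exact (congrFun this a).symm
  -- a kernel element vanishing at v₀ vanishes everywhere
  have hzero : ∀ (y : Fin N × Fin 3 → ℝ), Hbarᵀ *ᵥ y = 0 →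
      (∀ a, y (v₀, a) = 0) → y = 0 := by
    intro y hy h0
    set G := SimpleGraph.fromRel (fun i j => ∃ k, head k = i ∧ tail k = j) with hG
    have step : ∀ {u v : Fin N}, G.Adj u v → (∀ a, y (u, a) = 0) → ∀ a, y (v, a) = 0 := by
      intro u v huv h
      rw [hG, SimpleGraph.fromRel_adj] at huv
      rcases huv.2 with ⟨k, hk1, hk2⟩ | ⟨k, hk1, hk2⟩
      · subst hk1; subst hk2
        exact (hprop y hy k).mpr h
      · subst hk1; subst hk2
        exact (hprop y hy k).mp h
    have walk : ∀ {u v : Fin N} (w : G.Walk u v), (∀ a, y (u, a) = 0) → ∀ a, y (v, a) = 0 := by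
      intro u v w
      induction w with
      | nil => exact fun h => h
      | cons h p ih => exact fun h0 => ih (step h h0)
    funext p
    obtain ⟨i, a⟩ := p
    obtain ⟨w⟩ := htree.preconnected v₀ i
    exact walk w h0 a
  -- evaluation at v₀ is injective on ker Hbarᵀ
  set K := LinearMap.ker (Matrix.mulVecLin Hbarᵀ) with hK
  have hdimK : Module.finrank ℝ K ≤ 3 := by
    let ev : K →ₗ[ℝ] (Fin 3 → ℝ) :=
      (LinearMap.funLeft ℝ ℝ (fun a : Fin 3 => (v₀, a))).comp K.subtype
    have hinj : Function.Injective ev := by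
      rw [← LinearMap.ker_eq_bot]
      rw [LinearMap.ker_eq_bot']
      intro m hm
      have hm1 : Hbarᵀ *ᵥ (m : Fin N × Fin 3 → ℝ) = 0 := by
        have := m.2
        rwa [LinearMap.mem_ker, Matrix.mulVecLin_apply] at this
      have hm2 : ∀ a, (m : Fin N × Fin 3 → ℝ) (v₀, a) = 0 := fun a => congrFun hm a
      exact Subtype.ext (hzero _ hm1 hm2)
    have := LinearMap.finrank_le_finrank_of_injective hinj
    simpa [Module.finrank_fintype_fun_eq_card] using this
  -- rank-nullity on both sides
  have h1 := LinearMap.finrank_range_add_finrank_ker (Matrix.mulVecLin Hbar)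
  have h2 := LinearMap.finrank_range_add_finrank_ker (Matrix.mulVecLin Hbarᵀ)
  rw [Module.finrank_fintype_fun_eq_card, Fintype.card_prod, Fintype.card_fin,
    Fintype.card_fin] at h1 h2
  have hr : Module.finrank ℝ (LinearMap.range (Matrix.mulVecLin Hbarᵀ))
      = Module.finrank ℝ (LinearMap.range (Matrix.mulVecLin Hbar)) := by
    have := Matrix.rank_transpose Hbar
    simpa [Matrix.rank] using this
  rw [hr, ← hK] at h2
  have hpred : N.pred = N - 1 := rfl
  have hker0 : Module.finrank ℝ (LinearMap.ker (Matrix.mulVecLin Hbar)) = 0 := by omega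
  have hker3 : Module.finrank ℝ K = 3 := by omega
  refine ⟨fun x hx => ?_, hker3⟩
  have hx' : x ∈ LinearMap.ker (Matrix.mulVecLin Hbar) := by
    rwa [LinearMap.mem_ker, Matrix.mulVecLin_apply]
  have : LinearMap.ker (Matrix.mulVecLin Hbar) = ⊥ := Submodule.finrank_eq_zero.mp hker0
  rw [this, Submodule.mem_bot] at hx'
  exact hx'
end

section
/- Let A ∈ ℝ^{3×3} be symmetric positive definite and R ∈ SO(3). Then ψ(AR) = 0 if and only if R = I₃ or R = R_α(π, v) for some unit eigenvector v of A, where ψ(C) = vex((C-Cᵀ)/2) and R_α(π,v) = I₃ + 2([v]×)². -/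
/-!
`ψ(AR) = 0` says that `AR` is symmetric, i.e. `AR = RᵀA`. For a rotation this forces `R² = I`:
with `Q = R²` one gets `tr(AQ) = tr(RᵀAR) = tr A`, hence `tr(A (I - Q)ᵀ(I - Q)) = 0`, and a
positive definite `A` kills the positive semidefinite `(I - Q)ᵀ(I - Q)`. So `R` is a symmetric
involution of determinant one; the adjugate form of Cayley–Hamilton leaves only `R = I` or
`tr R = -1`. In the second case `P = (I + R)/2` is an orthogonal projection of trace one, hence
`P = vvᵀ` for a unit vector `v`, and `R = 2vvᵀ - I = I + 2[v]ײ`. Finally `AR` is symmetric iff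
`A` commutes with `R`, iff `A` commutes with `vvᵀ`, iff `v` is an eigenvector of `A`.
-/

open Matrix

def hat (x : Fin 3 → ℝ) : Matrix (Fin 3) (Fin 3) ℝ :=
  !![0, -x 2, x 1; x 2, 0, -x 0; -x 1, x 0, 0]

noncomputable def psi (C : Matrix (Fin 3) (Fin 3) ℝ) : Fin 3 → ℝ :=
  ![(C 2 1 - C 1 2) / 2, (C 0 2 - C 2 0) / 2, (C 1 0 - C 0 1) / 2]

namespace Matrix

variable {n : Type*}

theorem PosDef.isSymm {A : Matrix n n ℝ} (hA : A.PosDef) : A.IsSymm := by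
  simpa [IsSymm, conjTranspose_eq_transpose_of_trivial] using hA.isHermitian.eq

variable [Fintype n]

theorem IsSymm.isSymm_mul_iff_commute {α : Type*} [CommSemiring α] {A B : Matrix n n α}
    (hA : A.IsSymm) (hB : B.IsSymm) : (A * B).IsSymm ↔ Commute A B := by
  rw [IsSymm, transpose_mul, hA.eq, hB.eq, eq_comm]
  rfl

theorem IsSymm.commute_vecMulVec_self_iff {α : Type*} [CommSemiring α] {A : Matrix n n α}
    (hA : A.IsSymm) {v : n → α} (hv : v ⬝ᵥ v = 1) :
    Commute A (vecMulVec v v) ↔ ∃ c : α, A *ᵥ v = c • v := by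
  constructor
  · intro h
    refine ⟨v ⬝ᵥ (A *ᵥ v), ?_⟩
    have hvv : vecMulVec v v *ᵥ v = v := by
      rw [vecMulVec_mulVec, hv, MulOpposite.op_one, one_smul]
    calc A *ᵥ v = A *ᵥ (vecMulVec v v *ᵥ v) := by rw [hvv]
      _ = vecMulVec v v *ᵥ (A *ᵥ v) := by rw [mulVec_mulVec, h.eq, ← mulVec_mulVec]
      _ = (v ⬝ᵥ (A *ᵥ v)) • v := by rw [vecMulVec_mulVec, op_smul_eq_smul]
  · rintro ⟨c, hc⟩
    have hvA : v ᵥ* A = c • v := by rw [← mulVec_transpose, hA.eq, hc]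
    rw [Commute, SemiconjBy, mul_vecMulVec, vecMulVec_mul, hc, hvA, smul_vecMulVec,
      vecMulVec_smul]

open scoped ComplexOrder MatrixOrder in
theorem PosDef.trace_mul_conjTranspose_mul_self_eq_zero_iff [DecidableEq n] {𝕜 : Type*}
    [RCLike 𝕜] {A : Matrix n n 𝕜} (hA : A.PosDef) {B : Matrix n n 𝕜} :
    (A * (Bᴴ * B)).trace = 0 ↔ B = 0 := by
  obtain ⟨y, hy, rfl⟩ :=
    CStarAlgebra.isStrictlyPositive_iff_eq_star_mul_self.mp hA.isStrictlyPositive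
  have hcycle : y * (Bᴴ * B) * yᴴ = (B * yᴴ)ᴴ * (B * yᴴ) := by
    simp [conjTranspose_mul, mul_assoc]
  rw [star_eq_conjTranspose, ← trace_mul_cycle, hcycle, trace_conjTranspose_mul_self_eq_zero_iff,
    ← star_eq_conjTranspose, hy.star.mul_left_eq_zero]

theorem mul_self_eq_one_of_isSymm_mul [DecidableEq n] {A R : Matrix n n ℝ} (hA : A.PosDef)
    (hR : Rᵀ * R = 1) (hAR : (A * R).IsSymm) : R * R = 1 := by
  have hRA : Rᵀ * A = A * R := by rw [← hAR.eq, transpose_mul, hA.isSymm.eq]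
  have hQ : (R * R)ᵀ * (R * R) = 1 := by
    rw [transpose_mul, mul_assoc, ← mul_assoc Rᵀ R R, hR, one_mul, hR]
  have htr : (A * (R * R)).trace = A.trace := by
    rw [← mul_assoc, ← hRA, mul_assoc, trace_mul_comm, mul_assoc, mul_eq_one_comm.mp hR, mul_one]
  have htr' : (A * (R * R)ᵀ).trace = (A * (R * R)).trace := by
    rw [← trace_transpose, transpose_mul, transpose_transpose, hA.isSymm.eq, trace_mul_comm]
  rw [← sub_eq_zero, ← neg_eq_zero, neg_sub, ← hA.trace_mul_conjTranspose_mul_self_eq_zero_iff,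
    conjTranspose_eq_transpose_of_trivial, transpose_sub, transpose_one]
  simp only [sub_mul, mul_sub, mul_one, one_mul, hQ, trace_sub, htr, htr']
  ring

theorem IsSymm.exists_eq_vecMulVec_of_mul_self_of_trace_eq_one [DecidableEq n]
    {P : Matrix n n ℝ} (hPs : P.IsSymm) (hPP : P * P = P) (htr : P.trace = 1) :
    ∃ v : n → ℝ, v ⬝ᵥ v = 1 ∧ P = vecMulVec v v := by
  obtain ⟨k, -, hk⟩ : ∃ k ∈ Finset.univ, P k k ≠ 0 :=
    Finset.exists_ne_zero_of_sum_ne_zero (by change P.trace ≠ 0; simp [htr])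
  -- `v` is column `k` of `P`, normalised; `P - vvᵀ` is then a symmetric idempotent of trace 0.
  set u := P *ᵥ Pi.single k 1
  have hPu : P *ᵥ u = u := by rw [mulVec_mulVec, hPP]
  have huu : u ⬝ᵥ u = P k k := by
    calc u ⬝ᵥ u = (P *ᵥ u) ⬝ᵥ Pi.single k 1 := by
          rw [dotProduct_mulVec, ← mulVec_transpose, hPs.eq]
      _ = P k k := by rw [hPu, dotProduct_single, mul_one]; simp [u]
  have hpos : 0 < P k k :=
    huu ▸ lt_of_le_of_ne (Finset.sum_nonneg fun i _ => mul_self_nonneg (u i)) (Ne.symm (huu ▸ hk))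
  set v := (√(P k k))⁻¹ • u
  have hv : v ⬝ᵥ v = 1 := by
    simp only [v, smul_dotProduct, dotProduct_smul, huu, smul_eq_mul]
    field_simp
    rw [Real.sq_sqrt hpos.le]
  have hPv : P *ᵥ v = v := by rw [mulVec_smul, hPu]
  have hvP : v ᵥ* P = v := by rw [← mulVec_transpose, hPs.eq, hPv]
  refine ⟨v, hv, ?_⟩
  set Q := P - vecMulVec v v
  have hQQ : Qᴴ * Q = Q := by
    rw [conjTranspose_eq_transpose_of_trivial, transpose_sub, hPs.eq, transpose_vecMulVec]
    simp only [Q, sub_mul, mul_sub, hPP, mul_vecMulVec, vecMulVec_mul, hPv, hvP,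
      vecMulVec_mulVec, hv, MulOpposite.op_one, one_smul]
    abel
  have hQ : Q = 0 := by
    rw [← trace_conjTranspose_mul_self_eq_zero_iff, hQQ, trace_sub, trace_vecMulVec, hv, htr,
      sub_self]
  exact sub_eq_zero.mp hQ

theorem adjugate_fin_three_eq {α : Type*} [Field α] [NeZero (2 : α)]
    (X : Matrix (Fin 3) (Fin 3) α) :
    adjugate X = X * X - X.trace • X + ((X.trace ^ 2 - (X * X).trace) / 2) • 1 := by
  ext i j
  fin_cases i <;> fin_cases j <;>
    simp [adjugate_fin_three, mul_apply, Fin.sum_univ_three, trace_fin_three] <;>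
    field_simp <;> ring

theorem eq_one_or_trace_eq_neg_one_of_mul_self_eq_one {R : Matrix (Fin 3) (Fin 3) ℝ}
    (hR : R * R = 1) (hdet : R.det = 1) : R = 1 ∨ R.trace = -1 := by
  have hadj : adjugate R = R := by
    rw [← mul_one (adjugate R), ← hR, ← mul_assoc, adjugate_mul, hdet, one_smul, one_mul]
  rw [adjugate_fin_three_eq, hR, trace_one, Fintype.card_fin] at hadj
  refine or_iff_not_imp_right.mpr fun ht => ?_
  have hscalar : R = ((R.trace - 1) / 2) • (1 : Matrix (Fin 3) (Fin 3) ℝ) := by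
    have h1t : 1 + R.trace ≠ 0 := by contrapose! ht; linarith
    refine smul_right_injective _ h1t ?_
    linear_combination (norm := module) -hadj
  have h3 : R.trace = 3 := by
    have := congrArg trace hscalar
    rw [trace_smul, trace_one, Fintype.card_fin, smul_eq_mul] at this
    linarith
  rw [hscalar, h3]
  norm_num

end Matrix

theorem psi_eq_zero_iff {C : Matrix (Fin 3) (Fin 3) ℝ} : psi C = 0 ↔ C.IsSymm := by
  rw [IsSymm.ext_iff]
  constructor
  · intro h i j
    have h0 := congrFun h 0
    have h1 := congrFun h 1
    have h2 := congrFun h 2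
    simp only [psi, Fin.isValue, cons_val_zero, cons_val_one, cons_val_two, Nat.succ_eq_add_one,
      Nat.reduceAdd, tail_cons, head_cons, Pi.zero_apply, div_eq_zero_iff, sub_eq_zero,
      OfNat.ofNat_ne_zero, or_false] at h0 h1 h2
    fin_cases i <;> fin_cases j <;> simp [h0, h1, h2]
  · intro h
    ext k
    fin_cases k <;> simp [psi, h]

theorem hat_mul_hat (v : Fin 3 → ℝ) : hat v * hat v = vecMulVec v v - (v ⬝ᵥ v) • 1 := by
  ext i j
  fin_cases i <;> fin_cases j <;>
    simp [hat, vecMulVec, dotProduct, Fin.sum_univ_three, mul_apply] <;> ring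

theorem one_add_two_smul_hat_mul_hat {v : Fin 3 → ℝ} (hv : v ⬝ᵥ v = 1) :
    1 + (2 : ℝ) • (hat v * hat v) = (2 : ℝ) • vecMulVec v v - 1 := by
  rw [hat_mul_hat, hv, one_smul]
  module

theorem stmt14_general (A R : Matrix (Fin 3) (Fin 3) ℝ)
    (hA : A.PosDef)
    (hR : Rᵀ * R = 1) (hdet : R.det = 1) :
    psi (A * R) = 0 ↔
      (R = 1 ∨ ∃ (v : Fin 3 → ℝ) (lam : ℝ), v ⬝ᵥ v = 1 ∧ A *ᵥ v = lam • v ∧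
        R = (1 : Matrix (Fin 3) (Fin 3) ℝ) + (2 : ℝ) • (hat v * hat v)) := by
  rw [psi_eq_zero_iff]
  constructor
  · intro hAR
    have hR2 : R * R = 1 := mul_self_eq_one_of_isSymm_mul hA hR hAR
    have hRs : R.IsSymm := by rw [IsSymm, ← mul_one Rᵀ, ← hR2, ← mul_assoc, hR, one_mul]
    have hcomm : Commute A R := (hA.isSymm.isSymm_mul_iff_commute hRs).mp hAR
    refine (eq_one_or_trace_eq_neg_one_of_mul_self_eq_one hR2 hdet).imp id fun htr => ?_
    obtain ⟨v, hv, hP⟩ :=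
      ((isSymm_one.add hRs).smul (2⁻¹ : ℝ)).exists_eq_vecMulVec_of_mul_self_of_trace_eq_one
        (by rw [smul_mul_smul_comm, add_mul, mul_add, mul_add, hR2]; simp only [mul_one, one_mul]
            module)
        (by rw [trace_smul, trace_add, trace_one, htr, Fintype.card_fin]; norm_num)
    obtain ⟨lam, hlam⟩ := (hA.isSymm.commute_vecMulVec_self_iff hv).mp
      (hP ▸ ((Commute.one_right A).add_right hcomm).smul_right 2⁻¹)
    refine ⟨v, lam, hv, hlam, ?_⟩
    rw [one_add_two_smul_hat_mul_hat hv, ← hP]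
    module
  · rintro (rfl | ⟨v, lam, hv, hAv, rfl⟩)
    · simpa using hA.isSymm
    · rw [one_add_two_smul_hat_mul_hat hv, hA.isSymm.isSymm_mul_iff_commute
        (((show (vecMulVec v v).IsSymm from transpose_vecMulVec v v).smul 2).sub isSymm_one)]
      exact (((hA.isSymm.commute_vecMulVec_self_iff hv).mpr ⟨lam, hAv⟩).smul_right 2).sub_right
        (Commute.one_right A)

theorem stmt14 (A R : Matrix (Fin 3) (Fin 3) ℝ)
    (hA : A.PosDef) (hAsymm : Aᵀ = A)
    (hR : Rᵀ * R = 1) (hdet : R.det = 1) :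
    psi (A * R) = 0 ↔
      (R = 1 ∨ ∃ (v : Fin 3 → ℝ) (lam : ℝ), v ⬝ᵥ v = 1 ∧ A *ᵥ v = lam • v ∧
        R = (1 : Matrix (Fin 3) (Fin 3) ℝ) + (2 : ℝ) • (hat v * hat v)) :=
  stmt14_general A R hA hR hdet
end

section
/- Let A ∈ ℝ^{3×3} be symmetric positive definite. The function V(R) := tr(A(I₃ - R)) on SO(3) satisfies V(R) ≥ 0 for all R ∈ SO(3), with V(R) = 0 if and only if R = I₃. -/
/-!
For orthogonal `R` one has `(1 - R)ᵀ (1 - R) = 2 - R - Rᵀ`, and with `A` symmetric this gives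
`2 tr(A (1 - R)) = tr((1 - R) A (1 - R)ᵀ)`. The right-hand side is the trace of a positive
semidefinite matrix, hence nonnegative, and it vanishes only if `(1 - R) A (1 - R)ᵀ = 0`, which for
positive definite `A` forces `1 - R = 0`.
-/

open Matrix

namespace Matrix

variable {m n α : Type*} [Fintype m] [Fintype n]

theorem two_mul_trace_mul_one_sub_eq_trace [CommRing α] [DecidableEq n]
    {A Q : Matrix n n α} (hA : Aᵀ = A) (hQ : Qᵀ * Q = 1) :
    2 * (A * (1 - Q)).trace = ((1 - Q) * A * (1 - Q)ᵀ).trace := by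
  have hAQ : (A * Qᵀ).trace = (A * Q).trace := by
    rw [← trace_transpose, transpose_mul, transpose_transpose, hA, trace_mul_comm]
  have hsq : (1 - Q)ᵀ * (1 - Q) = 1 + 1 - Q - Qᵀ := by
    rw [transpose_sub, transpose_one, sub_mul, mul_sub, mul_sub, hQ]
    simp only [mul_one, one_mul]
    abel
  rw [trace_mul_cycle, hsq, trace_mul_comm _ A]
  simp only [Matrix.mul_sub, Matrix.mul_add, Matrix.mul_one, trace_sub, trace_add]
  rw [hAQ]
  ring

theorem PosDef.mul_mul_conjTranspose_eq_zero_iff [Ring α] [PartialOrder α] [StarRing α]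
    {A : Matrix n n α} (hA : A.PosDef) {B : Matrix m n α} :
    B * A * Bᴴ = 0 ↔ B = 0 := by
  refine ⟨fun h ↦ ?_, fun h ↦ by simp [h]⟩
  rw [← conjTranspose_eq_zero, ext_iff_mulVec]
  intro x
  by_contra hx
  rw [zero_mulVec] at hx
  have hpos := hA.dotProduct_mulVec_pos hx
  rw [star_mulVec, ← dotProduct_mulVec, mulVec_mulVec, mulVec_mulVec, conjTranspose_conjTranspose,
    h] at hpos
  simp at hpos

open scoped ComplexOrder in
theorem PosDef.trace_mul_mul_conjTranspose_eq_zero_iff {𝕜 : Type*} [RCLike 𝕜]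
    {A : Matrix n n 𝕜} (hA : A.PosDef) {B : Matrix m n 𝕜} :
    (B * A * Bᴴ).trace = 0 ↔ B = 0 :=
  (hA.posSemidef.mul_mul_conjTranspose_same B).trace_eq_zero_iff.trans
    hA.mul_mul_conjTranspose_eq_zero_iff

end Matrix

theorem stmt15_general (A : Matrix (Fin 3) (Fin 3) ℝ)
    (hA : A.PosDef)
    (R : Matrix (Fin 3) (Fin 3) ℝ) (hR : Rᵀ * R = 1) :
    0 ≤ (A * (1 - R)).trace ∧ ((A * (1 - R)).trace = 0 ↔ R = 1) := by
  have hAsymm : Aᵀ = A := by simpa using hA.isHermitian.eq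
  have htrace := two_mul_trace_mul_one_sub_eq_trace hAsymm hR
  rw [← conjTranspose_eq_transpose_of_trivial] at htrace
  refine ⟨?_, ?_⟩
  · have hnonneg := (hA.posSemidef.mul_mul_conjTranspose_same (1 - R)).trace_nonneg
    linarith
  · rw [← mul_eq_zero_iff_left two_ne_zero, htrace, hA.trace_mul_mul_conjTranspose_eq_zero_iff,
      sub_eq_zero, eq_comm]

theorem stmt15 (A : Matrix (Fin 3) (Fin 3) ℝ)
    (hA : A.PosDef) (hAsymm : Aᵀ = A)
    (R : Matrix (Fin 3) (Fin 3) ℝ) (hR : Rᵀ * R = 1) (hdet : R.det = 1) :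
    0 ≤ (A * (1 - R)).trace ∧ ((A * (1 - R)).trace = 0 ↔ R = 1) :=
  stmt15_general A hA R hR
end
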